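/- Let c be a circle-count function on states of Fin n. If a state σ is A-maximal and σ ≤ τ, then τ is A-maximal. In particular, if σ is A-maximal then for every coordinate i with σ(i) = false, the state S_A^{(i)} obtained from the all-A state S_A by changing only coordinate i to false satisfies c(S_A^{(i)}) = c(S_A) + 1. -/

import Mathlib

open LaurentPolynomial Polynomial Finset

/-- `aC σ` is the number of A-smoothings of the state `σ`, i.e. the number of
coordinates where `σ` takes the value `true`. -/
def aC {n : ℕ} (σ : Fin n → Bool) : ℕ := (Finset.univ.filter fun i => σ i = true).card

/-- `bC σ = n - aC σ` is the number of B-smoothings of the state `σ`. -/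
def bC {n : ℕ} (σ : Fin n → Bool) : ℕ := n - aC σ

/-- Two states are adjacent if they differ in exactly one coordinate. -/
def Adjacent {n : ℕ} (σ τ : Fin n → Bool) : Prop :=
  (Finset.univ.filter fun i => σ i ≠ τ i).card = 1

/-- `StateLE σ τ` iff `τ i = true` whenever `σ i = true`. -/
def StateLE {n : ℕ} (σ τ : Fin n → Bool) : Prop := ∀ i, σ i = true → τ i = true

/-- A circle-count function: `c σ ≥ 1` for all states and `|c σ - c τ| = 1`
for adjacent states. -/
def IsCircleCount {n : ℕ} (c : (Fin n → Bool) → ℕ) : Prop :=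
  (∀ σ, 1 ≤ c σ) ∧ ∀ σ τ, Adjacent σ τ → |(c σ : ℤ) - (c τ : ℤ)| = 1

/-- The all-A state: the constant-`true` state. -/
def SA (n : ℕ) : Fin n → Bool := fun _ => true

/-- The all-B state: the constant-`false` state. -/
def SB (n : ℕ) : Fin n → Bool := fun _ => false

/-- A state `σ` is A-maximal for `c` if `c σ = c S_A + b σ`. -/
def AMaximal {n : ℕ} (c : (Fin n → Bool) → ℕ) (σ : Fin n → Bool) : Prop :=
  c σ = c (SA n) + bC σ

/-- A state `σ` is B-minimal for `c` if `c σ = c S_B + a σ`. -/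
def BMinimal {n : ℕ} (c : (Fin n → Bool) → ℕ) (σ : Fin n → Bool) : Prop :=
  c σ = c (SB n) + aC σ

instance {n : ℕ} (c : (Fin n → Bool) → ℕ) : DecidablePred (AMaximal c) :=
  fun σ => inferInstanceAs (Decidable (c σ = c (SA n) + bC σ))

instance {n : ℕ} (c : (Fin n → Bool) → ℕ) : DecidablePred (BMinimal c) :=
  fun σ => inferInstanceAs (Decidable (c σ = c (SB n) + aC σ))

/-- The contribution `A^{a(σ)-b(σ)} (−A²−A⁻²)^{c(σ)-1} t^{T(σ)}` of the state `σ`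
to the Kauffman bracket; a Laurent polynomial in `A` over `ℤ[t]`, where `A` is the
Laurent variable `LaurentPolynomial.T 1` and `t` is `Polynomial.X`. -/
noncomputable def contrib {n : ℕ} (c T : (Fin n → Bool) → ℕ) (σ : Fin n → Bool) :
    LaurentPolynomial (Polynomial ℤ) :=
  LaurentPolynomial.T ((aC σ : ℤ) - (bC σ : ℤ)) *
    (-(LaurentPolynomial.T 2) - LaurentPolynomial.T (-2)) ^ (c σ - 1) *
    LaurentPolynomial.C (Polynomial.X ^ T σ)

/-- The Kauffman bracket state sum `⟨n, c, T⟩`. -/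
noncomputable def bracket (n : ℕ) (c T : (Fin n → Bool) → ℕ) :
    LaurentPolynomial (Polynomial ℤ) :=
  ∑ σ : Fin n → Bool, contrib c T σ

/-- The coefficient of `A^j` in a Laurent polynomial over `ℤ[t]`. -/
noncomputable def coeffA (P : LaurentPolynomial (Polynomial ℤ)) (j : ℤ) : Polynomial ℤ := P.coeff j

/-- The largest exponent of `A` with nonzero coefficient (junk value `0` for `P = 0`). -/
noncomputable def maxdeg (P : LaurentPolynomial (Polynomial ℤ)) : ℤ := WithBot.unbotD 0 P.coeff.support.max

/-- The smallest exponent of `A` with nonzero coefficient (junk value `0` for `P = 0`). -/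
noncomputable def mindeg (P : LaurentPolynomial (Polynomial ℤ)) : ℤ := WithTop.untopD 0 P.coeff.support.min

/-- `spanDeg P = maxdeg P - mindeg P`. -/
noncomputable def spanDeg (P : LaurentPolynomial (Polynomial ℤ)) : ℤ := maxdeg P - mindeg P

lemma aC_le {n : ℕ} (σ : Fin n → Bool) : aC σ ≤ n := by
  simpa [aC] using (Finset.card_filter_le Finset.univ fun i => σ i = true)

lemma adj_update {n : ℕ} (σ : Fin n → Bool) (i : Fin n) (b : Bool) (h : σ i ≠ b) :
    Adjacent σ (Function.update σ i b) := by
  unfold Adjacent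
  have : (Finset.univ.filter fun j => σ j ≠ Function.update σ i b j) = {i} := by
    ext j
    by_cases hj : j = i <;> simp [Function.update, hj, h]
  rw [this]; simp

lemma aC_update_true {n : ℕ} (σ : Fin n → Bool) (i : Fin n) (hi : σ i = false) :
    aC (Function.update σ i true) = aC σ + 1 := by
  unfold aC
  have : (Finset.univ.filter fun j => Function.update σ i true j = true)
      = insert i (Finset.univ.filter fun j => σ j = true) := by
    ext j
    by_cases hj : j = i <;> simp [Function.update, hj, hi]
  rw [this, Finset.card_insert_of_notMem (by simp [hi])]

lemma aC_lt_of_false {n : ℕ} (σ : Fin n → Bool) (i : Fin n) (hi : σ i = false) :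
    aC σ < n := by
  have := aC_le (Function.update σ i true)
  rw [aC_update_true σ i hi] at this
  omega

lemma bC_update_true {n : ℕ} (σ : Fin n → Bool) (i : Fin n) (hi : σ i = false) :
    bC (Function.update σ i true) + 1 = bC σ := by
  have h1 := aC_update_true σ i hi
  have h2 := aC_lt_of_false σ i hi
  unfold bC
  omega

lemma eq_SA_of_bC_eq_zero {n : ℕ} (σ : Fin n → Bool) (h : bC σ = 0) : σ = SA n := by
  by_contra hne
  have : ∃ i, σ i = false := by
    by_contra hall
    push_neg at hall
    exact hne (funext fun i => by
      have := hall i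
      cases hσ : σ i
      · exact absurd hσ (hall i)
      · rfl)
  obtain ⟨i, hi⟩ := this
  have := aC_lt_of_false σ i hi
  unfold bC at h
  omega

/-- Upper bound: `c σ ≤ c S_A + b σ` for every state. -/
lemma c_le_upper {n : ℕ} (c : (Fin n → Bool) → ℕ) (hc : IsCircleCount c) :
    ∀ σ, c σ ≤ c (SA n) + bC σ := by
  have key : ∀ k σ, bC σ = k → c σ ≤ c (SA n) + bC σ := by
    intro k
    induction k with
    | zero =>
      intro σ hb
      rw [eq_SA_of_bC_eq_zero σ hb]
      omega
    | succ k ih =>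
      intro σ hb
      have hex : ∃ i, σ i = false := by
        by_contra hall
        push_neg at hall
        have : σ = SA n := funext fun i => by
          cases hσ : σ i
          · exact absurd hσ (hall i)
          · rfl
        rw [this] at hb
        have : bC (SA n) = 0 := by
          unfold bC aC SA
          simp
        omega
      obtain ⟨i, hi⟩ := hex
      have hadj : Adjacent σ (Function.update σ i true) := adj_update σ i true (by simp [hi])
      have habs := hc.2 σ _ hadj
      rcases abs_eq (by norm_num : (0:ℤ) ≤ 1) |>.mp habs with h | h
      all_goals {
        have hbc := bC_update_true σ i hi
        have hb' : bC (Function.update σ i true) = k := by omega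
        have := ih _ hb'
        omega
      }
  intro σ
  exact key (bC σ) σ rfl

lemma amax_step {n : ℕ} (c : (Fin n → Bool) → ℕ) (hc : IsCircleCount c)
    (σ : Fin n → Bool) (i : Fin n) (hi : σ i = false) (hm : AMaximal c σ) :
    AMaximal c (Function.update σ i true) := by
  have hadj : Adjacent σ (Function.update σ i true) := adj_update σ i true (by simp [hi])
  have habs := hc.2 σ _ hadj
  have hub := c_le_upper c hc (Function.update σ i true)
  have hbc := bC_update_true σ i hi
  unfold AMaximal at hm ⊢
  rcases abs_eq (by norm_num : (0:ℤ) ≤ 1) |>.mp habs with h | h <;> omega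

/-- A-maximality propagates upwards: if `σ` is A-maximal and `σ ≤ τ` then `τ` is
A-maximal; in particular, if `σ` is A-maximal and `σ i = false`, then changing only
coordinate `i` of the all-A state to `false` increases the circle count by one. -/
theorem stmt6 {n : ℕ} (c : (Fin n → Bool) → ℕ) (hc : IsCircleCount c) :
    (∀ σ τ : Fin n → Bool, AMaximal c σ → StateLE σ τ → AMaximal c τ) ∧
    (∀ σ : Fin n → Bool, AMaximal c σ → ∀ i : Fin n, σ i = false →
      c (Function.update (SA n) i false) = c (SA n) + 1) := by
  have main : ∀ k σ τ, bC σ = k → AMaximal c σ → StateLE σ τ → AMaximal c τ := by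
    intro k
    induction k with
    | zero =>
      intro σ τ hb hm hle
      rw [eq_SA_of_bC_eq_zero σ hb] at hm hle
      have : τ = SA n := funext fun i => hle i rfl
      rw [this]; exact hm
    | succ k ih =>
      intro σ τ hb hm hle
      by_cases h : σ = τ
      · rw [← h]; exact hm
      · have hex : ∃ i, σ i ≠ τ i := by
          by_contra hall
          push_neg at hall
          exact h (funext hall)
        obtain ⟨i, hi⟩ := hex
        have hσi : σ i = false := by
          cases hσ : σ i
          · rfl
          · exact absurd (hle i hσ ▸ hσ) (by rw [hle i hσ] at hi ⊢; exact fun _ => hi hσ)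
        have hm' := amax_step c hc σ i hσi hm
        have hle' : StateLE (Function.update σ i true) τ := by
          intro j hj
          by_cases hji : j = i
          · subst hji
            cases hτ : τ j
            · rw [hσi, hτ] at hi; exact absurd rfl hi
            · rfl
          · apply hle
            rw [Function.update_of_ne hji] at hj
            exact hj
        have hb' : bC (Function.update σ i true) = k := by
          have := bC_update_true σ i hσi; omega
        exact ih _ τ hb' hm' hle'
  constructor
  · intro σ τ hm hle
    exact main (bC σ) σ τ rfl hm hle
  · intro σ hm i hi
    set τ := Function.update (SA n) i false with hτ
    have hle : StateLE σ τ := by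
      intro j hj
      by_cases hji : j = i
      · subst hji; rw [hi] at hj; exact absurd hj (by simp)
      · simp [hτ, Function.update_of_ne hji, SA]
    have hmτ : AMaximal c τ := main (bC σ) σ τ rfl hm hle
    have haτ : aC τ = n - 1 := by
      unfold aC
      have : (Finset.univ.filter fun j => τ j = true) = Finset.univ.erase i := by
        ext j
        by_cases hj : j = i <;> simp [hτ, Function.update, hj, SA]
      rw [this, Finset.card_erase_of_mem (Finset.mem_univ i)]
      simp
    have hbτ : bC τ = 1 := by
      have hn : 0 < n := i.pos
      unfold bC
      omega
    unfold AMaximal at hmτ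
    rw [hbτ] at hmτ
    exact hmτ
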